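/- Let H be the completion of {f ∈ C¹(ℝ) : |f|²_H := |f(0)|² + ∫_ℝ |f'(y)|² e^{−|y|} dy < ∞} under the norm |·|_H. Then H is a separable Hilbert space, Lip₁(ℝ) ⊂ H, and there exists a countable subset Λ ⊂ Lip₁(ℝ) that is dense in Lip₁(ℝ) with respect to the norm |·|_H; concretely, for each f ∈ H the function φ_f(x) := f(0) + ∫₀ˣ [(f'(y) ∧ 1) ∨ (−1)] dy belongs to Lip₁(ℝ), and if Λ_H is a countable dense subset of H then Λ := {φ_f : f ∈ Λ_H} is such a set. -/

import Mathlib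

open MeasureTheory ProbabilityTheory Set Filter

noncomputable section

/-- The σ-algebra on probability measures on `ℝ`, inherited from the canonical
σ-algebra on measures (generated by evaluation maps). -/
instance : MeasurableSpace (ProbabilityMeasure ℝ) :=
  MeasurableSpace.comap ((↑) : ProbabilityMeasure ℝ → Measure ℝ) inferInstance

/-- The 1-Wasserstein distance between two probability measures on `ℝ`,
defined as the infimum of `E|ξ₁ - ξ₂|` over all couplings. -/
def W1 (μ ν : ProbabilityMeasure ℝ) : ℝ :=
  sInf { c | ∃ ρ : Measure (ℝ × ℝ), IsProbabilityMeasure ρ ∧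
      ρ.map Prod.fst = (μ : Measure ℝ) ∧ ρ.map Prod.snd = (ν : Measure ℝ) ∧
      c = ∫ p, |p.1 - p.2| ∂ρ }

/-- Real functions on `ℝ` that are Lipschitz with constant 1. -/
def Lip1 : Set (ℝ → ℝ) := { φ | LipschitzWith 1 φ }

/-- The Dirac point mass at `x`, as a probability measure. -/
def dirac1 (x : ℝ) : ProbabilityMeasure ℝ := ⟨Measure.dirac x, inferInstance⟩

/-- A probability measure on `ℝ` has a finite first moment. -/
def FiniteFirstMoment (μ : ProbabilityMeasure ℝ) : Prop :=
  Integrable (fun z : ℝ => |z|) (μ : Measure ℝ)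

/-- The type of coefficients `σ, h : [0,T] × C_T × C_T × C_T(P₁) → ℝ`. -/
abbrev Coeff : Type :=
  ℝ → (ℝ → ℝ) → (ℝ → ℝ) → (ℝ → ProbabilityMeasure ℝ) → ℝ

/-- The path `x` stopped at time `t`, i.e. `s ↦ x (s ∧ t)`. -/
def stopP {α : Type*} (x : ℝ → α) (t : ℝ) : ℝ → α := fun s => x (min s t)

/-- running supremum over `[0,t]` of the distance between two real paths. -/
def pathSup (x x' : ℝ → ℝ) (t : ℝ) : ℝ := ⨆ s : Icc (0:ℝ) t, |x s.1 - x' s.1|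

/-- running supremum over `[0,t]` of the `W₁`-distance between two measure paths. -/
def measSup (μ μ' : ℝ → ProbabilityMeasure ℝ) (t : ℝ) : ℝ :=
  ⨆ s : Icc (0:ℝ) t, W1 (μ s.1) (μ' s.1)

variable {Ω : Type*} [mΩ : MeasurableSpace Ω]

/-- running supremum `ξ*_t = sup_{s ≤ t} |ξ_s|` of a process. -/
def runSup (ξ : ℝ → Ω → ℝ) (t : ℝ) (ω : Ω) : ℝ := ⨆ s : Icc (0:ℝ) t, |ξ s.1 ω|

/-- The natural filtration `F^Y_t = σ{Y_s : s ≤ t}` of a process `Y`. -/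
def natFilt (Y : ℝ → Ω → ℝ) (t : ℝ) : MeasurableSpace Ω :=
  ⨆ s ∈ Icc (0:ℝ) t, MeasurableSpace.comap (Y s) inferInstance

/-- A process `M` is a martingale on `[0,T]` with respect to the family of
σ-algebras `F` and the measure `P`. -/
def MartOn (T : ℝ) (P : Measure Ω) (F : ℝ → MeasurableSpace Ω) (M : ℝ → Ω → ℝ) : Prop :=
  (∀ t ∈ Icc (0:ℝ) T, Integrable (M t) P ∧ StronglyMeasurable[F t] (M t)) ∧
  ∀ s t : ℝ, s ∈ Icc (0:ℝ) T → t ∈ Icc (0:ℝ) T → s ≤ t → condExp (F s) P (M t) =ᵐ[P] M s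

/-- `(B¹, B²)` is a two-dimensional Brownian motion on `[0,T]` with respect to
the filtration `F` under `P`. -/
structure IsBM2 (T : ℝ) (P : Measure Ω) (F : ℝ → MeasurableSpace Ω)
    (B1 B2 : ℝ → Ω → ℝ) : Prop where
  adapted : ∀ t ∈ Icc (0:ℝ) T, StronglyMeasurable[F t] (B1 t) ∧ StronglyMeasurable[F t] (B2 t)
  start : ∀ᵐ ω ∂P, B1 0 ω = 0 ∧ B2 0 ω = 0
  cont : ∀ᵐ ω ∂P, ContinuousOn (fun t => B1 t ω) (Icc 0 T) ∧
      ContinuousOn (fun t => B2 t ω) (Icc 0 T)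
  incr_law : ∀ s t : ℝ, 0 ≤ s → s ≤ t → t ≤ T →
    P.map (fun ω => (B1 t ω - B1 s ω, B2 t ω - B2 s ω)) =
      (gaussianReal 0 (t - s).toNNReal).prod (gaussianReal 0 (t - s).toNNReal)
  incr_indep : ∀ s t : ℝ, 0 ≤ s → s ≤ t → t ≤ T →
    Indep (MeasurableSpace.comap (fun ω => (B1 t ω - B1 s ω, B2 t ω - B2 s ω))
      inferInstance) (F s) P

/-- Assumption (A1): the coefficients `σ, h` are bounded, progressively
measurable (measurable and non-anticipative in the path variables), and
Lipschitz in `(x, μ)`, uniformly in `(t, y)`, with respect to the sup-norm on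
paths and the `W₁`-distance on measures. -/
structure A1 (T : ℝ) (σc hc : Coeff) : Prop where
  bddσ : ∃ K, ∀ t x y μ, |σc t x y μ| ≤ K
  bddh : ∃ K, ∀ t x y μ, |hc t x y μ| ≤ K
  measσ : Measurable fun p : ℝ × (ℝ → ℝ) × (ℝ → ℝ) × (ℝ → ProbabilityMeasure ℝ) =>
      σc p.1 p.2.1 p.2.2.1 p.2.2.2
  meash : Measurable fun p : ℝ × (ℝ → ℝ) × (ℝ → ℝ) × (ℝ → ProbabilityMeasure ℝ) =>
      hc p.1 p.2.1 p.2.2.1 p.2.2.2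
  nonantσ : ∀ t x y μ, σc t x y μ = σc t (stopP x t) (stopP y t) (stopP μ t)
  nonanth : ∀ t x y μ, hc t x y μ = hc t (stopP x t) (stopP y t) (stopP μ t)
  lip : ∃ C > 0, ∀ t ∈ Icc (0:ℝ) T, ∀ x x' y μ μ',
      |σc t x y μ - σc t x' y μ'| ≤ C * (pathSup x x' t + measSup μ μ' t) ∧
      |hc t x y μ - hc t x' y μ'| ≤ C * (pathSup x x' t + measSup μ μ' t)

/-- A function `f = f(t,x)` of class `C^{1,2}_b([0,T] × ℝ)`: bounded and
continuous, with bounded continuous derivatives `∂_t f`, `∂_x f`, `∂²_{xx} f`. -/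
structure C12b (f : ℝ → ℝ → ℝ) : Prop where
  cont : Continuous fun p : ℝ × ℝ => f p.1 p.2
  bdd : ∃ K, ∀ t x, |f t x| ≤ K
  dt : ∃ ft : ℝ → ℝ → ℝ, (∀ t x, HasDerivAt (fun s => f s x) (ft t x) t) ∧
      Continuous (fun p : ℝ × ℝ => ft p.1 p.2) ∧ ∃ K, ∀ t x, |ft t x| ≤ K
  dx : ∃ fx fxx : ℝ → ℝ → ℝ,
      (∀ t x, HasDerivAt (fun z => f t z) (fx t x) x) ∧
      (∀ t x, HasDerivAt (fun z => fx t z) (fxx t x) x) ∧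
      Continuous (fun p : ℝ × ℝ => fx p.1 p.2) ∧
      Continuous (fun p : ℝ × ℝ => fxx p.1 p.2) ∧
      (∃ K, ∀ t x, |fx t x| ≤ K) ∧ (∃ K, ∀ t x, |fxx t x| ≤ K)

/-- Assumption (A2): the observation coefficient has the separated form
`h(t,x,y_{·∧t}) = Σ_{i=1}^N f_i(t, x_t) g_i(t, y_{·∧t})` with `f_i ∈ C^{1,2}_b`
and `g_i` bounded measurable; in particular `h` depends on the state path only
through its current value and does not depend on the measure variable. -/
def A2 (hc : Coeff) : Prop :=
  ∃ (N : ℕ) (f : Fin N → ℝ → ℝ → ℝ) (g : Fin N → ℝ → (ℝ → ℝ) → ℝ),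
    (∀ i, C12b (f i)) ∧
    (∀ i, Measurable (fun p : ℝ × (ℝ → ℝ) => g i p.1 p.2) ∧
      (∃ K, ∀ t y, |g i t y| ≤ K) ∧ ∀ t y, g i t y = g i t (stopP y t)) ∧
    ∀ t x y μ, hc t x y μ = ∑ i, f i t (x t) * g i t y

/-- Evaluation `σ(t, X_{·∧t}(ω), Y_{·∧t}(ω), μ_{·∧t}(ω))` of a coefficient
along the (stopped) paths of the processes `X, Y, μ`. -/
def coefAt (σc : Coeff) (X Y : ℝ → Ω → ℝ) (μ : ℝ → Ω → ProbabilityMeasure ℝ)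
    (t : ℝ) (ω : Ω) : ℝ :=
  σc t (fun r => X (min r t) ω) (fun r => Y (min r t) ω) (fun r => μ (min r t) ω)

/-- The process `μ` of probability measures is adapted to the filtration
generated by `Y`. -/
def AdaptedMeas (T : ℝ) (Y : ℝ → Ω → ℝ) (μ : ℝ → Ω → ProbabilityMeasure ℝ) : Prop :=
  ∀ t ∈ Icc (0:ℝ) T, Measurable[natFilt Y t] (μ t)

/-- `t ↦ μ_t` is continuous on `[0,T]` for the `W₁`-distance. -/
def W1ContOn (T : ℝ) (μ : ℝ → ProbabilityMeasure ℝ) : Prop :=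
  ∀ t ∈ Icc (0:ℝ) T, ∀ ε > 0, ∃ δ > 0, ∀ s ∈ Icc (0:ℝ) T, |s - t| < δ →
    W1 (μ s) (μ t) < ε

/-- Membership in `S^p_{F^Y}(P₁)` : continuous (in `W₁`), `F^Y`-adapted,
`P₁(ℝ)`-valued processes whose running supremum of the `W₁`-distance to `δ₀`
has a finite `p`-th moment. -/
def MemSp (p T : ℝ) (Q0 : Measure Ω) (Y : ℝ → Ω → ℝ)
    (μ : ℝ → Ω → ProbabilityMeasure ℝ) : Prop :=
  AdaptedMeas T Y μ ∧
  (∀ᵐ ω ∂Q0, W1ContOn T (fun t => μ t ω)) ∧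
  Integrable (fun ω => (⨆ t : Icc (0:ℝ) T, W1 (μ t.1 ω) (dirac1 0)) ^ p) Q0

/-- `X` is a (weak, martingale-problem formulation) solution of
`dX_t = σ(t, X_{·∧t}, Y_{·∧t}, μ_{·∧t}) dB¹_t`, `X_0 = x` : `X` is a continuous
adapted martingale started at `x` whose quadratic variation is
`∫₀ᵗ σ(...)² ds`, whose covariation with `B¹` is `∫₀ᵗ σ(...) ds` and whose
covariation with `Y` vanishes. -/
structure SolvesX (T x : ℝ) (σc : Coeff) (Q0 : Measure Ω) (F : ℝ → MeasurableSpace Ω)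
    (B1 Y : ℝ → Ω → ℝ) (μ : ℝ → Ω → ProbabilityMeasure ℝ) (X : ℝ → Ω → ℝ) : Prop where
  start : ∀ᵐ ω ∂Q0, X 0 ω = x
  cont : ∀ᵐ ω ∂Q0, ContinuousOn (fun t => X t ω) (Icc 0 T)
  mart : MartOn T Q0 F X
  qv : MartOn T Q0 F fun t ω => (X t ω) ^ 2 - ∫ s in (0:ℝ)..t, (coefAt σc X Y μ s ω) ^ 2
  covB1 : MartOn T Q0 F fun t ω => X t ω * B1 t ω - ∫ s in (0:ℝ)..t, coefAt σc X Y μ s ω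
  covY : MartOn T Q0 F fun t ω => X t ω * Y t ω

/-- `L` is a (martingale-problem formulation) solution of
`dL_t = h(t, X_{·∧t}, Y_{·∧t}, μ_{·∧t}) L_t dY_t`, `L_0 = 1` : `L` is a
positive continuous adapted martingale started at `1` with quadratic variation
`∫₀ᵗ (h L)² ds`, covariation `∫₀ᵗ h L ds` with `Y` and vanishing covariation
with `B¹`. -/
structure SolvesL (T : ℝ) (hc : Coeff) (Q0 : Measure Ω) (F : ℝ → MeasurableSpace Ω)
    (B1 Y X : ℝ → Ω → ℝ) (μ : ℝ → Ω → ProbabilityMeasure ℝ) (L : ℝ → Ω → ℝ) : Prop where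
  start : ∀ᵐ ω ∂Q0, L 0 ω = 1
  cont : ∀ᵐ ω ∂Q0, ContinuousOn (fun t => L t ω) (Icc 0 T)
  pos : ∀ᵐ ω ∂Q0, ∀ t ∈ Icc (0:ℝ) T, 0 < L t ω
  mart : MartOn T Q0 F L
  qv : MartOn T Q0 F fun t ω =>
      (L t ω) ^ 2 - ∫ s in (0:ℝ)..t, (coefAt hc X Y μ s ω * L s ω) ^ 2
  covY : MartOn T Q0 F fun t ω =>
      L t ω * Y t ω - ∫ s in (0:ℝ)..t, coefAt hc X Y μ s ω * L s ω
  covB1 : MartOn T Q0 F fun t ω => L t ω * B1 t ω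

/-- `ν` is (a version of) the image `T(μ)` of `μ` under the solution map:
`ν_t(A) = E^{Q⁰}[L^μ_t 1_{X^μ_t ∈ A} | F^Y_t] / E^{Q⁰}[L^μ_t | F^Y_t]`. -/
def IsSolMap (T : ℝ) (Q0 : Measure Ω) (Y X L : ℝ → Ω → ℝ)
    (ν : ℝ → Ω → ProbabilityMeasure ℝ) : Prop :=
  ∀ t ∈ Icc (0:ℝ) T, ∀ A : Set ℝ, MeasurableSet A →
    (fun ω => (((ν t ω : Measure ℝ) A).toReal)) =ᵐ[Q0]
      fun ω => (condExp (natFilt Y t) Q0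
          (fun ω' => A.indicator (fun _ => (1:ℝ)) (X t ω') * L t ω') ω) /
        (condExp (natFilt Y t) Q0 (L t) ω)

/-- `ν` is (a version of) the conditional law process `μ^{X|Y}` of `X` given the
filtration generated by `Y`, under the measure `P`. -/
def IsCondLaw (T : ℝ) (P : Measure Ω) (Y X : ℝ → Ω → ℝ)
    (ν : ℝ → Ω → ProbabilityMeasure ℝ) : Prop :=
  AdaptedMeas T Y ν ∧
  ∀ t ∈ Icc (0:ℝ) T, ∀ A : Set ℝ, MeasurableSet A →
    (fun ω => (((ν t ω : Measure ℝ) A).toReal)) =ᵐ[P]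
      condExp (natFilt Y t) P (fun ω' => A.indicator (fun _ => (1:ℝ)) (X t ω'))

end
noncomputable section

open scoped ENNReal

/-- The pre-Hilbert class `ℍ₀ = {f ∈ C¹(ℝ) : |f(0)|² + ∫ |f'(y)|² e^{-|y|} dy < ∞}`. -/
def preH (f : ℝ → ℝ) : Prop :=
  ContDiff ℝ 1 f ∧ Integrable fun y => (deriv f y) ^ 2 * Real.exp (-|y|)

/-- The squared `ℍ`-norm `|f|²_ℍ = |f(0)|² + ∫ |f'(y)|² e^{-|y|} dy`. -/
def HnormSq (f : ℝ → ℝ) : ℝ := (f 0) ^ 2 + ∫ y, (deriv f y) ^ 2 * Real.exp (-|y|)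

/-- The weighted measure `e^{-|y|} dy` on `ℝ`. -/
def wMeasure : Measure ℝ := volume.withDensity fun y => ENNReal.ofReal (Real.exp (-|y|))

/-- A concrete realization of the completion `ℍ`: `ℝ × L²(e^{-|y|}dy)` with the
`ℓ²`-product structure (recording `(f(0), f')`). -/
abbrev Hsp : Type := WithLp 2 (ℝ × (Lp ℝ 2 wMeasure))

/-- The `Lip₁`-truncation `φ_f(x) = f(0) + ∫₀ˣ ((f'(y) ∧ 1) ∨ (−1)) dy`. -/
def phiOf (f : ℝ → ℝ) : ℝ → ℝ :=
  fun x => f 0 + ∫ y in (0:ℝ)..x, max (min (deriv f y) 1) (-1)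

/-! Recording `f ↦ (f 0, f')` maps `ℍ₀` isometrically onto a dense subspace of
`ℝ × L²(e^{-|y|} dy)`: the primitives `a + ∫₀ˣ g` of bounded continuous `g` lie in `ℍ₀`, and bounded
continuous functions are dense in `L²` of the finite measure `e^{-|y|} dy`. A 1-Lipschitz `f` has
`|f'| ≤ 1`, so it lies in `ℍ`, and truncating `h'` to `[-1, 1]` only brings it pointwise closer to
`f'`. Hence `|f - φ_h|_ℍ ≤ |f - h|_ℍ`, and the `φ_h` for `h` in a countable family of `ℍ₀` with
dense image in `ℍ` are dense in `Lip₁(ℝ)`. -/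

lemma integrable_exp_neg_abs : Integrable fun y : ℝ => Real.exp (-|y|) := by
  have hneg : IntegrableOn (fun y : ℝ => Real.exp (-|y|)) (Iic 0) :=
    (integrableOn_exp_Iic 0).congr_fun
      (fun y hy => by rw [abs_of_nonpos (mem_Iic.mp hy), neg_neg]) measurableSet_Iic
  have hpos : IntegrableOn (fun y : ℝ => Real.exp (-|y|)) (Ioi 0) :=
    (exp_neg_integrableOn_Ioi 0 one_pos).congr_fun
      (fun y hy => by simp [abs_of_pos (mem_Ioi.mp hy)]) measurableSet_Ioi
  simpa [Iic_union_Ioi] using hneg.union hpos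

instance : IsFiniteMeasure wMeasure :=
  isFiniteMeasure_withDensity_ofReal integrable_exp_neg_abs.hasFiniteIntegral

lemma integral_wMeasure (g : ℝ → ℝ) :
    ∫ y, g y ∂wMeasure = ∫ y, g y * Real.exp (-|y|) := by
  rw [wMeasure, integral_withDensity_eq_integral_toReal_smul (by fun_prop)
    (ae_of_all _ fun _ => ENNReal.ofReal_lt_top)]
  simp_rw [ENNReal.toReal_ofReal (Real.exp_pos _).le, smul_eq_mul, mul_comm]

lemma integrable_wMeasure_iff {g : ℝ → ℝ} :
    Integrable g wMeasure ↔ Integrable fun y => g y * Real.exp (-|y|) := by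
  rw [wMeasure, integrable_withDensity_iff (by fun_prop)
    (ae_of_all _ fun _ => ENNReal.ofReal_lt_top)]
  simp_rw [ENNReal.toReal_ofReal (Real.exp_pos _).le]

lemma memLp_deriv_iff (f : ℝ → ℝ) :
    MemLp (deriv f) 2 wMeasure ↔ Integrable fun y => deriv f y ^ 2 * Real.exp (-|y|) := by
  rw [memLp_two_iff_integrable_sq (measurable_deriv f).aestronglyMeasurable,
    integrable_wMeasure_iff]

lemma memLp_deriv_of_preH {f : ℝ → ℝ} (hf : preH f) : MemLp (deriv f) 2 wMeasure :=
  (memLp_deriv_iff f).2 hf.2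

lemma norm_toLp_wMeasure_sq {g : ℝ → ℝ} (hg : MemLp g 2 wMeasure) :
    ‖hg.toLp g‖ ^ 2 = ∫ y, g y ^ 2 * Real.exp (-|y|) := by
  rw [← real_inner_self_eq_norm_sq, MeasureTheory.L2.inner_def, ← integral_wMeasure]
  refine integral_congr_ae ?_
  filter_upwards [hg.coeFn_toLp] with y hy
  simp [hy, sq]

instance : SecondCountableTopology Hsp :=
  have : Fact ((2 : ℝ≥0∞) ≠ ∞) := ⟨ENNReal.ofNat_ne_top⟩
  inferInstanceAs (SecondCountableTopology (WithLp 2 (ℝ × Lp ℝ 2 wMeasure)))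

open Classical in
/-- The class of `f'` in `L²(e^{-|y|} dy)`, and `0` when `f' ∉ L²`. -/
def derivL2 (f : ℝ → ℝ) : Lp ℝ 2 wMeasure :=
  if h : MemLp (deriv f) 2 wMeasure then h.toLp _ else 0

def toHsp (f : ℝ → ℝ) : Hsp := WithLp.toLp 2 (f 0, derivL2 f)

lemma derivL2_eq {f : ℝ → ℝ} (hf : MemLp (deriv f) 2 wMeasure) : derivL2 f = hf.toLp _ :=
  dif_pos hf

lemma norm_toHsp_sub_toHsp_sq (f g : ℝ → ℝ) :
    ‖toHsp f - toHsp g‖ ^ 2 = (f 0 - g 0) ^ 2 + ‖derivL2 f - derivL2 g‖ ^ 2 := by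
  rw [WithLp.prod_norm_sq_eq_of_L2]
  simp [toHsp, Real.norm_eq_abs, sq_abs]

lemma norm_toHsp_sq {f : ℝ → ℝ} (hf : MemLp (deriv f) 2 wMeasure) :
    ‖toHsp f‖ ^ 2 = HnormSq f := by
  rw [HnormSq, ← norm_toLp_wMeasure_sq hf, ← derivL2_eq hf, WithLp.prod_norm_sq_eq_of_L2]
  simp [toHsp, Real.norm_eq_abs, sq_abs]

lemma norm_toHsp_sub_toHsp_sq_eq_integral {f g : ℝ → ℝ} (hf : MemLp (deriv f) 2 wMeasure)
    (hg : MemLp (deriv g) 2 wMeasure) :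
    ‖toHsp f - toHsp g‖ ^ 2 =
      (f 0 - g 0) ^ 2 + ∫ y, (deriv f y - deriv g y) ^ 2 * Real.exp (-|y|) := by
  rw [norm_toHsp_sub_toHsp_sq, derivL2_eq hf, derivL2_eq hg, ← MemLp.toLp_sub,
    norm_toLp_wMeasure_sq]
  rfl

section Primitive

open scoped BoundedContinuousFunction

variable (a : ℝ) (g : ℝ →ᵇ ℝ)

lemma hasDerivAt_primitive (x : ℝ) :
    HasDerivAt (fun x => a + ∫ t in (0:ℝ)..x, g t) (g x) x :=
  (g.continuous.integral_hasStrictDerivAt 0 x).hasDerivAt.const_add a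

lemma deriv_primitive : deriv (fun x => a + ∫ t in (0:ℝ)..x, g t) = g :=
  funext fun x => (hasDerivAt_primitive a g x).deriv

lemma memLp_deriv_primitive :
    MemLp (deriv fun x => a + ∫ t in (0:ℝ)..x, g t) 2 wMeasure := by
  rw [deriv_primitive]
  exact .of_bound g.continuous.aestronglyMeasurable ‖g‖ (ae_of_all _ g.norm_coe_le_norm)

lemma preH_primitive : preH fun x => a + ∫ t in (0:ℝ)..x, g t :=
  ⟨contDiff_one_iff_deriv.2 ⟨fun x => (hasDerivAt_primitive a g x).differentiableAt,
      by simpa only [deriv_primitive] using g.continuous⟩,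
    (memLp_deriv_iff _).1 (memLp_deriv_primitive a g)⟩

lemma toHsp_primitive :
    toHsp (fun x => a + ∫ t in (0:ℝ)..x, g t) =
      WithLp.toLp 2 (a, BoundedContinuousFunction.toLp 2 wMeasure ℝ g) := by
  simp only [toHsp, derivL2_eq (memLp_deriv_primitive a g), intervalIntegral.integral_same,
    add_zero]
  refine congrArg _ (Prod.ext rfl (Lp.ext ((memLp_deriv_primitive a g).coeFn_toLp.trans ?_)))
  rw [deriv_primitive]
  exact (g.coeFn_toLp 2 wMeasure ℝ).symm

theorem denseRange_toHsp : DenseRange fun f : {f : ℝ → ℝ // preH f} => toHsp f.1 := by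
  have hdense : DenseRange fun p : ℝ × (ℝ →ᵇ ℝ) =>
      WithLp.toLp 2 (p.1, BoundedContinuousFunction.toLp 2 wMeasure ℝ p.2) :=
    (WithLp.toLp_surjective 2).denseRange.comp
      (denseRange_id.prodMap
        (BoundedContinuousFunction.toLp_denseRange ℝ wMeasure ℝ ENNReal.ofNat_ne_top))
      (WithLp.prod_continuous_toLp 2 _ _)
  refine hdense.mono ?_
  rintro _ ⟨⟨a, g⟩, rfl⟩
  exact ⟨⟨_, preH_primitive a g⟩, toHsp_primitive a g⟩

end Primitive

theorem DenseRange.exists_countable_dense_image {α β : Type*} [TopologicalSpace β]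
    [SecondCountableTopology β] {f : α → β} (hf : DenseRange f) :
    ∃ s : Set α, s.Countable ∧ Dense (f '' s) := by
  obtain ⟨t, hts, htc, htd⟩ := hf.exists_countable_dense_subset
  choose u hu using fun z : t => hts z.2
  refine ⟨range u, @countable_range _ _ htc.to_subtype u, ?_⟩
  rwa [← range_comp, show f ∘ u = Subtype.val from funext hu, Subtype.range_coe]

lemma abs_deriv_le_one {f : ℝ → ℝ} (hf : f ∈ Lip1) (y : ℝ) : |deriv f y| ≤ 1 := by
  simpa using norm_deriv_le_of_lipschitz (x₀ := y) hf

lemma memLp_deriv_of_mem_Lip1 {f : ℝ → ℝ} (hf : f ∈ Lip1) : MemLp (deriv f) 2 wMeasure :=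
  .of_bound (measurable_deriv f).aestronglyMeasurable 1 (ae_of_all _ (abs_deriv_le_one hf))

lemma abs_max_min_one_le (t : ℝ) : |max (min t 1) (-1)| ≤ 1 :=
  abs_le.2 ⟨le_max_right _ _, max_le (min_le_right _ _) (by norm_num)⟩

lemma abs_sub_max_min_one_le {a : ℝ} (ha : |a| ≤ 1) (t : ℝ) :
    |a - max (min t 1) (-1)| ≤ |a - t| := by
  obtain ⟨ha₁, ha₂⟩ := abs_le.1 ha
  conv_lhs => rw [← max_eq_left ha₁, ← min_eq_left ha₂]
  exact (abs_max_sub_max_le_abs _ _ _).trans (abs_min_sub_min_le_max _ _ _ _ |>.trans (by simp))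

lemma phiOf_zero (f : ℝ → ℝ) : phiOf f 0 = f 0 := by simp [phiOf]

lemma phiOf_mem_Lip1 (f : ℝ → ℝ) : phiOf f ∈ Lip1 := by
  have hbound (y : ℝ) : ‖max (min (deriv f y) 1) (-1)‖ ≤ 1 := abs_max_min_one_le _
  have hint (a b : ℝ) : IntervalIntegrable (fun y => max (min (deriv f y) 1) (-1)) volume a b :=
    .mono_fun' intervalIntegrable_const
      (((measurable_deriv f).min measurable_const).max measurable_const).aestronglyMeasurable
      (ae_of_all _ hbound)
  refine LipschitzWith.of_dist_le_mul fun x x' => ?_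
  rw [Real.dist_eq, Real.dist_eq, phiOf, phiOf, add_sub_add_left_eq_sub,
    intervalIntegral.integral_interval_sub_left (hint 0 x) (hint 0 x'), NNReal.coe_one, one_mul]
  simpa using intervalIntegral.norm_integral_le_of_norm_le_const fun y _ => hbound y

lemma deriv_phiOf {f : ℝ → ℝ} (hf : ContDiff ℝ 1 f) :
    deriv (phiOf f) = fun y => max (min (deriv f y) 1) (-1) := by
  have hcont : Continuous fun y => max (min (deriv f y) 1) (-1) :=
    ((hf.continuous_deriv le_rfl).min continuous_const).max continuous_const
  exact funext fun x => ((hcont.integral_hasStrictDerivAt 0 x).hasDerivAt.const_add (f 0)).deriv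

lemma norm_toHsp_sub_phiOf_le {f h : ℝ → ℝ} (hf : f ∈ Lip1) (hh : preH h) :
    ‖toHsp f - toHsp (phiOf h)‖ ≤ ‖toHsp f - toHsp h‖ := by
  have hφ := memLp_deriv_of_mem_Lip1 (phiOf_mem_Lip1 h)
  have hf' := memLp_deriv_of_mem_Lip1 hf
  have hh' := memLp_deriv_of_preH hh
  have hL2 : ‖derivL2 f - derivL2 (phiOf h)‖ ≤ ‖derivL2 f - derivL2 h‖ := by
    rw [derivL2_eq hf', derivL2_eq hφ, derivL2_eq hh', ← MemLp.toLp_sub, ← MemLp.toLp_sub]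
    refine Lp.norm_le_norm_of_ae_le ?_
    filter_upwards [(hf'.sub hφ).coeFn_toLp, (hf'.sub hh').coeFn_toLp] with y hφy hhy
    rw [hφy, hhy, deriv_phiOf hh.1]
    exact abs_sub_max_min_one_le (abs_deriv_le_one hf y) _
  refine pow_le_pow_iff_left₀ (norm_nonneg _) (norm_nonneg _) two_ne_zero |>.1 ?_
  rw [norm_toHsp_sub_toHsp_sq, norm_toHsp_sub_toHsp_sq, phiOf_zero]
  gcongr

/-- Formalization of the `ℍ`-space construction in the proof of Lemma 2.1:
the completion `ℍ` of `ℍ₀` under `|·|_ℍ` is a separable Hilbert space (realized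
as `ℝ × L²(e^{-|y|}dy)`, into which `ℍ₀` embeds isometrically with dense range);
`Lip₁(ℝ) ⊂ ℍ`; for every `f` the truncation `φ_f` belongs to `Lip₁(ℝ)`; and
there is a countable set `Λ = {φ_f : f ∈ Λ_ℍ} ⊂ Lip₁(ℝ)` (with `Λ_ℍ`
countable) which is `|·|_ℍ`-dense in `Lip₁(ℝ)`. -/
theorem Hspace_properties :
    CompleteSpace Hsp ∧
    TopologicalSpace.SeparableSpace Hsp ∧
    (∀ f ∈ Lip1, Integrable fun y => (deriv f y) ^ 2 * Real.exp (-|y|)) ∧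
    (∃ J : (ℝ → ℝ) → Hsp,
      (∀ f, preH f → ‖J f‖ ^ 2 = HnormSq f) ∧
      (∀ f g, preH f → preH g →
        ‖J f - J g‖ ^ 2 =
          (f 0 - g 0) ^ 2 + ∫ y, (deriv f y - deriv g y) ^ 2 * Real.exp (-|y|)) ∧
      DenseRange fun f : { f : ℝ → ℝ // preH f } => J f.1) ∧
    (∀ f : ℝ → ℝ, phiOf f ∈ Lip1) ∧
    (∃ Λ₀ : Set (ℝ → ℝ), Λ₀.Countable ∧ (phiOf '' Λ₀ ⊆ Lip1) ∧
      ∀ f ∈ Lip1, ∀ ε > (0:ℝ), ∃ g ∈ phiOf '' Λ₀,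
        Real.sqrt ((f 0 - g 0) ^ 2 +
            ∫ y, (deriv f y - deriv g y) ^ 2 * Real.exp (-|y|)) < ε) := by
  obtain ⟨Λ, hΛ, hΛdense⟩ := denseRange_toHsp.exists_countable_dense_image
  refine ⟨inferInstance, inferInstance,
    fun f hf => (memLp_deriv_iff f).1 (memLp_deriv_of_mem_Lip1 hf),
    ⟨toHsp, fun f hf => norm_toHsp_sq (memLp_deriv_of_preH hf),
      fun f g hf hg =>
        norm_toHsp_sub_toHsp_sq_eq_integral (memLp_deriv_of_preH hf) (memLp_deriv_of_preH hg),
      denseRange_toHsp⟩,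
    phiOf_mem_Lip1, Subtype.val '' Λ, hΛ.image _, image_subset_iff.2 fun f _ => phiOf_mem_Lip1 f,
    fun f hf ε hε => ?_⟩
  obtain ⟨_, ⟨h, hhΛ, rfl⟩, hfh⟩ := hΛdense.exists_dist_lt (toHsp f) hε
  refine ⟨phiOf h, mem_image_of_mem _ (mem_image_of_mem _ hhΛ), ?_⟩
  rw [← norm_toHsp_sub_toHsp_sq_eq_integral (memLp_deriv_of_mem_Lip1 hf)
      (memLp_deriv_of_mem_Lip1 (phiOf_mem_Lip1 h)), Real.sqrt_sq (norm_nonneg _)]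
  exact ((norm_toHsp_sub_phiOf_le hf h.2).trans_eq (dist_eq_norm _ _).symm).trans_lt hfh

end
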